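/- arXiv:1701.04603 — 5 statements merged into one kernel-verified Lean document; each statement's English description precedes it below -/
import Mathlib

section
/- Let c:[0,∞]→[0,∞] be continuous and strictly increasing with c(0)=0, and let μ, ν be finite nonnegative Borel measures on a metric space X with μ(X)=ν(X). Let C_c(μ,ν) = inf over transport plans λ ∈ Π(μ,ν) of ∫ c(d(x,y)) dλ(x,y), and W(μ,ν) = inf over λ ∈ Π(μ,ν) of ∫ min{d(x,y),1} dλ(x,y). Then for every ε>0 such that C_c(μ,ν)/ε lies in the range of c, one has W(μ,ν) ≤ c⁻¹(C_c(μ,ν)/ε)·μ(X) + ε + C_c(μ,ν)/c(1). -/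
open MeasureTheory Set Filter
open scoped ENNReal Topology

/-- `lam` is a transport plan (coupling) between `μ` and `ν`. -/
def IsCoupling {X : Type*} [MeasurableSpace X] (lam : Measure (X × X)) (μ ν : Measure X) : Prop :=
  lam.map Prod.fst = μ ∧ lam.map Prod.snd = ν

theorem stmt0 {X : Type*} [EMetricSpace X] [MeasurableSpace X] [OpensMeasurableSpace X]
    (c : ℝ≥0∞ → ℝ≥0∞) (hc_cont : Continuous c) (hc_mono : StrictMono c) (hc0 : c 0 = 0)
    (μ ν : Measure X) [IsFiniteMeasure μ] [IsFiniteMeasure ν]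
    (hmass : μ univ = ν univ)
    (Cc W : ℝ≥0∞)
    (hCc : Cc = ⨅ lam : {lam : Measure (X × X) // IsCoupling lam μ ν},
        ∫⁻ p, c (edist p.1 p.2) ∂lam.1)
    (hW : W = ⨅ lam : {lam : Measure (X × X) // IsCoupling lam μ ν},
        ∫⁻ p, min (edist p.1 p.2) 1 ∂lam.1)
    (hopt : ∃ lam : Measure (X × X), IsCoupling lam μ ν ∧
        ∫⁻ p, c (edist p.1 p.2) ∂lam = Cc)
    (ε : ℝ≥0∞) (hε : 0 < ε)
    (z : ℝ≥0∞) (hz : c z = Cc / ε) :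
    W ≤ z * μ univ + ε + Cc / c 1 := by
  obtain ⟨lam, hcoup, hint⟩ := hopt
  have hlamuniv : lam univ = μ univ := by
    have h1 := hcoup.1
    have h2 : (lam.map Prod.fst) univ = μ univ := by rw [h1]
    rwa [Measure.map_apply measurable_fst MeasurableSet.univ, preimage_univ] at h2
  have hW' : W ≤ ∫⁻ p, min (edist p.1 p.2) 1 ∂lam := by
    rw [hW]; exact iInf_le_of_le ⟨lam, hcoup⟩ le_rfl
  -- key estimate: for any δ with 0 < c δ < ∞,
  -- ∫ min(d,1) ≤ δ * μ(univ) + (c δ)⁻¹ * Cc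
  have key : ∀ δ : ℝ≥0∞, c δ ≠ 0 → c δ ≠ ∞ →
      ∫⁻ p, min (edist p.1 p.2) 1 ∂lam ≤ δ * μ univ + (c δ)⁻¹ * Cc := by
    intro δ hδ0 hδt
    have hpt : ∀ p : X × X,
        min (edist p.1 p.2) 1 ≤ δ + (c δ)⁻¹ * c (edist p.1 p.2) := by
      intro p
      rcases le_or_gt (edist p.1 p.2) δ with hle | hlt
      · exact le_add_right (le_trans (min_le_left _ _) hle)
      · refine le_add_left (le_trans (min_le_right _ _) ?_)
        have h1 : c δ ≤ c (edist p.1 p.2) := (hc_mono hlt).le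
        calc (1 : ℝ≥0∞) = (c δ)⁻¹ * c δ := (ENNReal.inv_mul_cancel hδ0 hδt).symm
          _ ≤ (c δ)⁻¹ * c (edist p.1 p.2) := mul_le_mul_right h1 _
    calc ∫⁻ p, min (edist p.1 p.2) 1 ∂lam
        ≤ ∫⁻ p, (δ + (c δ)⁻¹ * c (edist p.1 p.2)) ∂lam := lintegral_mono hpt
      _ = δ * lam univ + (c δ)⁻¹ * ∫⁻ p, c (edist p.1 p.2) ∂lam := by
          rw [lintegral_add_left measurable_const, lintegral_const,
            lintegral_const_mul' _ _ (by simpa using hδ0)]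
      _ = δ * μ univ + (c δ)⁻¹ * Cc := by rw [hlamuniv, hint]
  by_cases hεtop : ε = ∞
  · subst hεtop
    simp
  rcases eq_or_ne Cc 0 with hCc0 | hCc0
  · -- Cc = 0; then W = 0 essentially
    -- find δ0 > 0 with c δ0 < 1
    have h1 : {y : ℝ≥0∞ | y < 1} ∈ 𝓝 (c 0) := by
      rw [hc0]; exact Iio_mem_nhds zero_lt_one
    have hf : ∀ᶠ x in 𝓝 (0 : ℝ≥0∞), c x < 1 := (hc_cont.tendsto 0).eventually h1
    obtain ⟨a, ha_pos, ha⟩ := ENNReal.nhds_zero_basis.eventually_iff.mp hf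
    obtain ⟨δ0, hδ0pos, hδ0a⟩ := exists_between ha_pos
    have hcδ0 : c δ0 < 1 := ha hδ0a
    set b : ℝ≥0∞ := ε / μ univ with hb
    have hbpos : 0 < b := ENNReal.div_pos hε.ne' (measure_ne_top μ univ)
    set δ : ℝ≥0∞ := min δ0 b with hδ
    have hδpos : 0 < δ := lt_min hδ0pos hbpos
    have hcδ0' : c δ ≠ 0 := by
      have : c 0 < c δ := hc_mono hδpos
      rw [hc0] at this
      exact this.ne'
    have hcδt : c δ ≠ ∞ := by
      have : c δ ≤ c δ0 := hc_mono.monotone (min_le_left _ _)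
      exact (lt_of_le_of_lt this (lt_of_lt_of_le hcδ0 le_top)).ne
    have hδμ : δ * μ univ ≤ ε := by
      rcases eq_or_ne (μ univ) 0 with hμ0 | hμ0
      · simp [hμ0]
      · calc δ * μ univ ≤ b * μ univ :=
              mul_le_mul_left (min_le_right _ _) _
          _ = ε := ENNReal.div_mul_cancel hμ0 (measure_ne_top μ univ)
    have := key δ hcδ0' hcδt
    rw [hCc0, mul_zero, add_zero] at this
    calc W ≤ δ * μ univ := le_trans hW' this
      _ ≤ ε := hδμ
      _ ≤ z * μ univ + ε + Cc / c 1 := le_add_right (le_add_left le_rfl)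
  rcases eq_or_ne Cc ∞ with hCct | hCct
  · -- Cc = ∞ : c z = ∞, so all distances are ≤ z
    have hcz : c z = ∞ := by rw [hz, hCct, ENNReal.top_div_of_ne_top hεtop]
    have hpt : ∀ p : X × X, min (edist p.1 p.2) 1 ≤ z := by
      intro p
      refine le_trans (min_le_left _ _) ?_
      by_contra hlt
      push_neg at hlt
      exact absurd (hc_mono hlt) (by simp [hcz])
    have : ∫⁻ p, min (edist p.1 p.2) 1 ∂lam ≤ z * lam univ := by
      calc ∫⁻ p, min (edist p.1 p.2) 1 ∂lam ≤ ∫⁻ _, z ∂lam := lintegral_mono hpt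
        _ = z * lam univ := lintegral_const z
    calc W ≤ z * lam univ := le_trans hW' this
      _ = z * μ univ := by rw [hlamuniv]
      _ ≤ z * μ univ + ε + Cc / c 1 := le_add_right le_self_add
  · -- 0 < Cc < ∞ : use δ = z
    have hcz0 : c z ≠ 0 := by
      rw [hz]
      simp only [ne_eq, ENNReal.div_eq_zero_iff, not_or]
      exact ⟨hCc0, hεtop⟩
    have hczt : c z ≠ ∞ := by
      rw [hz]
      exact (ENNReal.div_lt_top hCct hε.ne').ne
    have hkey := key z hcz0 hczt
    have hcalc : (c z)⁻¹ * Cc = ε := by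
      rw [hz, ← ENNReal.div_eq_inv_mul, div_eq_mul_inv,
        ENNReal.inv_div (Or.inr hCct) (Or.inr hCc0),
        ENNReal.mul_div_cancel hCc0 hCct]
    rw [hcalc] at hkey
    calc W ≤ z * μ univ + ε := le_trans hW' hkey
      _ ≤ z * μ univ + ε + Cc / c 1 := le_self_add
end

section
/- Let c:[0,∞)→[0,∞) be a bounded, concave, nondecreasing, Lipschitz, C¹ function with c(0)=0 and c(s)>0 for s>0 (so that (x,y) ↦ c(|x−y|) is a metric on ℝⁿ). Let μ, ν be finite nonnegative Borel measures on ℝⁿ with μ(ℝⁿ)=ν(ℝⁿ), let λ be an optimal plan for the cost c(|x−y|), and let v be a Kantorovich potential, i.e. v is 1-Lipschitz with respect to the metric c(|x−y|) and v(x) − v(y) = c(|x−y|) for every (x,y) ∈ supp λ. Then there exists a set E ⊆ ℝⁿ of full Lebesgue measure such that v is differentiable on E, and for every (x,y) ∈ supp λ ∩ (E×E) with x ≠ y, ∇v(x) = ∇v(y) = c'(|x−y|)·(x−y)/|x−y|. -/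
open MeasureTheory Set

noncomputable section

/-- The (topological) support of a measure. -/
def msupp {X : Type*} [TopologicalSpace X] [MeasurableSpace X] (μ : Measure X) : Set X :=
  {p | ∀ U : Set X, IsOpen U → p ∈ U → 0 < μ U}

section aux

variable {F : Type*} [NormedAddCommGroup F] [InnerProductSpace ℝ F]

lemma aux_hasFDerivAt_norm {z : F} (hz : z ≠ 0) :
    HasFDerivAt (fun a : F => ‖a‖) ((‖z‖⁻¹ : ℝ) • innerSL ℝ z) z := by
  have hz' : ‖z‖ ≠ 0 := norm_ne_zero_iff.2 hz
  have h1 : HasFDerivAt (fun a : F => ‖a‖ ^ 2) (2 • innerSL ℝ z) z := by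
    simpa using (hasFDerivAt_id z).norm_sq
  have h2 : HasDerivAt Real.sqrt (1 / (2 * Real.sqrt (‖z‖ ^ 2))) (‖z‖ ^ 2) :=
    Real.hasDerivAt_sqrt (pow_ne_zero 2 hz')
  have h3 := h2.comp_hasFDerivAt z h1
  have hfun : (Real.sqrt ∘ fun a : F => ‖a‖ ^ 2) = fun a : F => ‖a‖ := by
    funext a
    simp [Function.comp, Real.sqrt_sq (norm_nonneg a)]
  rw [hfun] at h3
  refine h3.congr_fderiv ?_
  rw [Real.sqrt_sq (norm_nonneg z)]
  ext u
  simp only [ContinuousLinearMap.smul_apply, smul_eq_mul,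
    ContinuousLinearMap.coe_smul', Pi.smul_apply]
  rw [two_smul]
  field_simp
  ring

end aux

theorem stmt5 (n : ℕ) (c : ℝ → ℝ) (L : NNReal)
    (hc0 : c 0 = 0) (hcpos : ∀ s : ℝ, 0 < s → 0 < c s) (hcmono : Monotone c)
    (hcbdd : ∃ M, ∀ s, c s ≤ M) (hconc : ConcaveOn ℝ (Ici 0) c)
    (hlip : LipschitzOnWith L c (Ici 0)) (hC1 : ContDiffOn ℝ 1 c (Ici 0))
    (μ ν : Measure (EuclideanSpace ℝ (Fin n))) [IsFiniteMeasure μ] [IsFiniteMeasure ν]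
    (hmass : μ univ = ν univ)
    (lam : Measure (EuclideanSpace ℝ (Fin n) × EuclideanSpace ℝ (Fin n)))
    (hcoup : IsCoupling lam μ ν)
    (hopt : ∀ lam', IsCoupling lam' μ ν →
      ∫ p, c ‖p.1 - p.2‖ ∂lam ≤ ∫ p, c ‖p.1 - p.2‖ ∂lam')
    (v : EuclideanSpace ℝ (Fin n) → ℝ)
    (hv_lip : ∀ x y, |v x - v y| ≤ c ‖x - y‖)
    (hv_supp : ∀ p ∈ msupp lam, v p.1 - v p.2 = c ‖p.1 - p.2‖) :
    ∃ E : Set (EuclideanSpace ℝ (Fin n)), volume Eᶜ = 0 ∧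
      (∀ x ∈ E, DifferentiableAt ℝ v x) ∧
      ∀ x y, (x, y) ∈ msupp lam → x ∈ E → y ∈ E → x ≠ y →
        gradient v x = derivWithin c (Ici 0) ‖x - y‖ • (‖x - y‖)⁻¹ • (x - y) ∧
        gradient v y = derivWithin c (Ici 0) ‖x - y‖ • (‖x - y‖)⁻¹ • (x - y) := by
  classical
  -- c is dominated by L * s
  have hcle : ∀ s : ℝ, 0 ≤ s → c s ≤ L * s := by
    intro s hs
    have h := hlip.dist_le_mul s hs 0 Set.self_mem_Ici
    rw [Real.dist_eq, Real.dist_eq, hc0, sub_zero, sub_zero] at h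
    calc c s ≤ |c s| := le_abs_self _
      _ ≤ L * |s| := h
      _ = L * s := by rw [abs_of_nonneg hs]
  -- v is Lipschitz
  have hvlip : LipschitzWith L v := by
    refine LipschitzWith.of_dist_le_mul fun a b => ?_
    calc dist (v a) (v b) = |v a - v b| := Real.dist_eq _ _
      _ ≤ c ‖a - b‖ := hv_lip a b
      _ ≤ L * ‖a - b‖ := hcle _ (norm_nonneg _)
      _ = L * dist a b := by rw [dist_eq_norm]
  have hrad : ∀ᵐ x ∂(volume : Measure (EuclideanSpace ℝ (Fin n))), DifferentiableAt ℝ v x :=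
    hvlip.ae_differentiableAt
  refine ⟨{x | DifferentiableAt ℝ v x}, ?_, fun x hx => hx, ?_⟩
  · simpa [compl_setOf] using (ae_iff.1 hrad)
  intro x y hxy hx hy hne
  have hzne : x - y ≠ 0 := sub_ne_zero.2 hne
  set r : ℝ := ‖x - y‖ with hrdef
  have hr : 0 < r := norm_pos_iff.2 hzne
  have hmem : Ici (0 : ℝ) ∈ nhds r := Ici_mem_nhds hr
  have hdiffc : DifferentiableAt ℝ c r :=
    ((hC1.differentiableOn one_ne_zero) r hr.le).differentiableAt hmem
  have hdw : derivWithin c (Ici 0) r = deriv c r := derivWithin_of_mem_nhds hmem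
  have hcd : HasDerivAt c (derivWithin c (Ici 0) r) r := by
    rw [hdw]; exact hdiffc.hasDerivAt
  set d : ℝ := derivWithin c (Ici 0) r with hddef
  -- derivative of a ↦ ‖a - y‖ at x
  have hn1 : HasFDerivAt (fun a : EuclideanSpace ℝ (Fin n) => ‖a - y‖)
      ((r⁻¹ : ℝ) • innerSL ℝ (x - y)) x := by
    have := (aux_hasFDerivAt_norm hzne).comp x ((hasFDerivAt_id x).sub_const y)
    simpa [Function.comp_def] using this
  have hψ1 : HasFDerivAt (fun a : EuclideanSpace ℝ (Fin n) => c ‖a - y‖)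
      (d • (r⁻¹ : ℝ) • innerSL ℝ (x - y)) x := by
    have h := hcd.comp_hasFDerivAt x hn1
    simpa [smul_smul, Function.comp_def] using h
  -- derivative of b ↦ ‖x - b‖ at y
  have hn2 : HasFDerivAt (fun b : EuclideanSpace ℝ (Fin n) => ‖x - b‖)
      (-((r⁻¹ : ℝ) • innerSL ℝ (x - y))) y := by
    have := (aux_hasFDerivAt_norm hzne).comp y ((hasFDerivAt_id y).const_sub x)
    simpa [Function.comp_def] using this
  have hψ2 : HasFDerivAt (fun b : EuclideanSpace ℝ (Fin n) => c ‖x - b‖)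
      (-(d • (r⁻¹ : ℝ) • innerSL ℝ (x - y))) y := by
    have h := hcd.comp_hasFDerivAt y hn2
    simpa [smul_smul, Function.comp_def] using h
  have hsupp := hv_supp (x, y) hxy
  simp only at hsupp
  -- x is a local max of a ↦ v a - c ‖a - y‖
  have hmax1 : IsLocalMax (fun a => v a - c ‖a - y‖) x := by
    refine Filter.Eventually.of_forall fun a => ?_
    show v a - c ‖a - y‖ ≤ v x - c ‖x - y‖
    have h1 : v a - v y ≤ c ‖a - y‖ := le_trans (le_abs_self _) (hv_lip a y)
    have h2 : v x - c ‖x - y‖ = v y := by linarith [hsupp]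
    linarith
  -- y is a local max of b ↦ -v b - c ‖x - b‖
  have hmax2 : IsLocalMax (fun b => -v b - c ‖x - b‖) y := by
    refine Filter.Eventually.of_forall fun b => ?_
    show -v b - c ‖x - b‖ ≤ -v y - c ‖x - y‖
    have h1 : v x - v b ≤ c ‖x - b‖ := le_trans (le_abs_self _) (hv_lip x b)
    have h2 : -v y - c ‖x - y‖ = -v x := by linarith [hsupp]
    linarith
  -- fderiv computations
  have hfx : fderiv ℝ v x = d • (r⁻¹ : ℝ) • innerSL ℝ (x - y) := by
    have h0 := hmax1.fderiv_eq_zero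
    rw [fderiv_fun_sub hx hψ1.differentiableAt, sub_eq_zero] at h0
    rw [h0, hψ1.fderiv]
  have hfy : fderiv ℝ v y = d • (r⁻¹ : ℝ) • innerSL ℝ (x - y) := by
    have h0 := hmax2.fderiv_eq_zero
    have hneg : DifferentiableAt ℝ (fun b => -v b) y := hy.neg
    rw [fderiv_fun_sub hneg hψ2.differentiableAt, sub_eq_zero] at h0
    have hneg' : fderiv ℝ (fun b => -v b) y = -fderiv ℝ v y := fderiv_fun_neg
    rw [hneg', hψ2.fderiv] at h0
    exact neg_injective h0
  -- translate to gradients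
  have key : (InnerProductSpace.toDual ℝ (EuclideanSpace ℝ (Fin n)))
      (d • (r⁻¹ : ℝ) • (x - y)) = d • (r⁻¹ : ℝ) • innerSL ℝ (x - y) := by
    ext u
    simp [InnerProductSpace.toDual_apply_apply, real_inner_smul_left]
  have hgx : HasGradientAt v (d • (r⁻¹ : ℝ) • (x - y)) x := by
    rw [hasGradientAt_iff_hasFDerivAt, key, ← hfx]
    exact hx.hasFDerivAt
  have hgy : HasGradientAt v (d • (r⁻¹ : ℝ) • (x - y)) y := by
    rw [hasGradientAt_iff_hasFDerivAt, key, ← hfy]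
    exact hy.hasFDerivAt
  exact ⟨hgx.gradient, hgy.gradient⟩

end
end

section
/- Let c:[0,∞)→[0,∞) be a bounded, concave, nondecreasing, C¹ function with c(0)=0 and c>0 on (0,∞), and let μ, ν be mutually singular finite nonnegative Borel measures on ℝⁿ, absolutely continuous with respect to Lebesgue measure, with μ(ℝⁿ)=ν(ℝⁿ). Let v be a Kantorovich potential for the cost c(|x−y|) and let b:ℝⁿ→ℝⁿ with b ∈ L¹(μ)∩L¹(ν). Then |∫ ⟨b,∇v⟩ d(μ−ν)| ≤ min{μ(ℝⁿ), ν(ℝⁿ)} · sup_{x,y ∈ F, x≠y} |c'(|x−y|)·⟨b(x)−b(y), (x−y)/|x−y|⟩|, where F = supp μ ∪ supp ν. -/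
open MeasureTheory Set
open scoped RealInnerProductSpace

noncomputable section

section Aux

open InnerProductSpace Filter
open scoped Topology

variable {E : Type*} [NormedAddCommGroup E] [InnerProductSpace ℝ E] [CompleteSpace E]

lemma hasGradientAt_norm_sub' (y x : E) (h : x ≠ y) :
    HasGradientAt (fun z => ‖z - y‖) (‖x - y‖⁻¹ • (x - y)) x := by
  have hw : x - y ≠ 0 := sub_ne_zero.2 h
  have hsq : HasFDerivAt (fun z => ‖z - y‖ ^ 2)
      (2 • (innerSL ℝ (x - y)).comp (ContinuousLinearMap.id ℝ E)) x := by
    simpa using ((hasFDerivAt_id x).sub_const y).norm_sq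
  have hpos : (0:ℝ) < ‖x - y‖ ^ 2 := pow_pos (norm_pos_iff.2 hw) 2
  have hsqrt : HasDerivAt Real.sqrt (1 / (2 * Real.sqrt (‖x - y‖ ^ 2))) (‖x - y‖ ^ 2) :=
    Real.hasDerivAt_sqrt hpos.ne'
  have hcomp := hsqrt.comp_hasFDerivAt x hsq
  have hfun : (Real.sqrt ∘ fun z => ‖z - y‖ ^ 2) = fun z => ‖z - y‖ := by
    funext z; simp [Function.comp, Real.sqrt_sq (norm_nonneg _)]
  rw [hfun] at hcomp
  have heq : (1 / (2 * Real.sqrt (‖x - y‖ ^ 2))) •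
      (2 • (innerSL ℝ (x - y)).comp (ContinuousLinearMap.id ℝ E))
      = toDual ℝ E (‖x - y‖⁻¹ • (x - y)) := by
    ext z
    have hn' : Real.sqrt (‖x - y‖ ^ 2) = ‖x - y‖ := Real.sqrt_sq (norm_nonneg _)
    simp only [ContinuousLinearMap.smul_apply, ContinuousLinearMap.coe_smul', Pi.smul_apply,
      ContinuousLinearMap.coe_comp', Function.comp_apply, ContinuousLinearMap.coe_id', id_eq,
      innerSL_apply_apply, toDual_apply_apply, hn', two_smul, smul_eq_mul, ContinuousLinearMap.add_apply]
    rw [real_inner_smul_left]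
    have hnz : ‖x - y‖ ≠ 0 := norm_ne_zero_iff.2 hw
    rw [inner_sub_left]
    field_simp
    ring
  rw [heq] at hcomp
  exact hasGradientAt_iff_hasFDerivAt.2 hcomp

/-- `c ∘ (‖· - y‖)` has the expected gradient at `x ≠ y`, for `c` that is `C¹` on `Ici 0`. -/
lemma hasGradientAt_cost' {c : ℝ → ℝ} (hC1 : ContDiffOn ℝ 1 c (Ici 0)) {y x : E} (h : x ≠ y) :
    HasGradientAt (fun z => c ‖z - y‖)
      (derivWithin c (Ici 0) ‖x - y‖ • (‖x - y‖⁻¹ • (x - y))) x := by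
  have hdpos : (0:ℝ) < ‖x - y‖ := norm_pos_iff.2 (sub_ne_zero.2 h)
  have hmem : Ici (0:ℝ) ∈ 𝓝 ‖x - y‖ := Ici_mem_nhds hdpos
  have hdc : DifferentiableAt ℝ c ‖x - y‖ :=
    (hC1.differentiableOn one_ne_zero).differentiableAt hmem
  have hc : HasDerivAt c (derivWithin c (Ici 0) ‖x - y‖) ‖x - y‖ := by
    rw [derivWithin_of_mem_nhds hmem]; exact hdc.hasDerivAt
  have hn := (hasGradientAt_norm_sub' y x h).hasFDerivAt
  have hcomp := hc.comp_hasFDerivAt x hn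
  have heq : derivWithin c (Ici 0) ‖x - y‖ • toDual ℝ E (‖x - y‖⁻¹ • (x - y))
      = toDual ℝ E (derivWithin c (Ici 0) ‖x - y‖ • (‖x - y‖⁻¹ • (x - y))) :=
    (map_smul _ _ _).symm
  rw [heq] at hcomp
  exact hasGradientAt_iff_hasFDerivAt.2 hcomp

/-- First-order condition at the first marginal point. -/
lemma gradient_eq_fst' {c : ℝ → ℝ} (hC1 : ContDiffOn ℝ 1 c (Ici 0)) {v : E → ℝ} {x y : E}
    (hxy : x ≠ y) (hub : ∀ z, v z - v y ≤ c ‖z - y‖) (heq : v x - v y = c ‖x - y‖)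
    (hd : DifferentiableAt ℝ v x) :
    gradient v x = derivWithin c (Ici 0) ‖x - y‖ • (‖x - y‖⁻¹ • (x - y)) := by
  set w := derivWithin c (Ici 0) ‖x - y‖ • (‖x - y‖⁻¹ • (x - y)) with hw
  have hcost := hasGradientAt_cost' (E := E) hC1 hxy
  set g := fun z => v z - c ‖z - y‖ with hg
  have hmax : IsLocalMax g x := by
    have : IsMaxOn g univ x := by
      intro z _
      simp only [hg, mem_setOf_eq]
      linarith [hub z]
    exact this.isLocalMax Filter.univ_mem
  have hdg : DifferentiableAt ℝ g x := hd.sub hcost.differentiableAt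
  have hg0 : HasFDerivAt g (0 : E →L[ℝ] ℝ) x := by
    have := hmax.fderiv_eq_zero
    simpa [this] using hdg.hasFDerivAt
  have hv : HasFDerivAt v ((0 : E →L[ℝ] ℝ) + toDual ℝ E w) x := by
    have h := hg0.add hcost.hasFDerivAt
    have : (g + fun z => c ‖z - y‖) = v := by funext z; simp [hg]
    rwa [this] at h
  rw [zero_add] at hv
  exact (hasGradientAt_iff_hasFDerivAt.2 hv).gradient

/-- First-order condition at the second marginal point. -/
lemma gradient_eq_snd' {c : ℝ → ℝ} (hC1 : ContDiffOn ℝ 1 c (Ici 0)) {v : E → ℝ} {x y : E}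
    (hxy : x ≠ y) (hub : ∀ z, v x - v z ≤ c ‖x - z‖) (heq : v x - v y = c ‖x - y‖)
    (hd : DifferentiableAt ℝ v y) :
    gradient v y = derivWithin c (Ici 0) ‖x - y‖ • (‖x - y‖⁻¹ • (x - y)) := by
  have hyx : y ≠ x := hxy.symm
  have hcost := hasGradientAt_cost' (E := E) hC1 hyx
  set h := fun z => v z + c ‖z - x‖ with hh
  have hnr : ∀ z : E, ‖x - z‖ = ‖z - x‖ := fun z => norm_sub_rev _ _
  have hmin : IsLocalMin h y := by
    have : IsMinOn h univ y := by
      intro z _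
      have h1 : v x - v z ≤ c ‖z - x‖ := by rw [← hnr]; exact hub z
      simp only [hh, mem_setOf_eq]
      rw [norm_sub_rev y x]
      linarith
    exact this.isLocalMin Filter.univ_mem
  have hdh : DifferentiableAt ℝ h y := hd.add hcost.differentiableAt
  have hh0 : HasFDerivAt h (0 : E →L[ℝ] ℝ) y := by
    have := hmin.fderiv_eq_zero
    simpa [this] using hdh.hasFDerivAt
  have hv : HasFDerivAt v ((0 : E →L[ℝ] ℝ) - toDual ℝ E
      (derivWithin c (Ici 0) ‖y - x‖ • (‖y - x‖⁻¹ • (y - x)))) y := by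
    have hsub := hh0.sub hcost.hasFDerivAt
    have : (h - fun z => c ‖z - x‖) = v := by funext z; simp [hh]
    rwa [this] at hsub
  rw [zero_sub] at hv
  have hkey : -toDual ℝ E (derivWithin c (Ici 0) ‖y - x‖ • (‖y - x‖⁻¹ • (y - x)))
      = toDual ℝ E (derivWithin c (Ici 0) ‖x - y‖ • (‖x - y‖⁻¹ • (x - y))) := by
    rw [← map_neg]
    congr 1
    rw [norm_sub_rev y x]
    rw [show y - x = -(x - y) by abel]
    rw [smul_neg, smul_neg, neg_neg]
  rw [hkey] at hv
  exact (hasGradientAt_iff_hasFDerivAt.2 hv).gradient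

lemma ae_mem_msupp' {X : Type*} [TopologicalSpace X] [MeasurableSpace X]
    [SecondCountableTopology X] (μ : Measure X) :
    ∀ᵐ p ∂μ, p ∈ msupp μ := by
  set B := TopologicalSpace.countableBasis X with hB
  have hbasis := TopologicalSpace.isBasis_countableBasis X
  have hcount : B.Countable := TopologicalSpace.countable_countableBasis X
  set N := ⋃₀ {U ∈ B | μ U = 0} with hN
  have hNnull : μ N = 0 := by
    rw [measure_sUnion_null_iff (hcount.mono (sep_subset _ _))]
    exact fun U hU => hU.2
  rw [ae_iff]
  refine measure_mono_null ?_ hNnull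
  intro p hp
  simp only [mem_setOf_eq, msupp] at hp
  push_neg at hp
  obtain ⟨U, hUopen, hpU, hUnull⟩ := hp
  have hUnull' : μ U = 0 := le_antisymm hUnull zero_le
  obtain ⟨V, hVB, hpV, hVU⟩ := hbasis.exists_subset_of_mem_open hpU hUopen
  exact ⟨V, ⟨hVB, measure_mono_null hVU hUnull'⟩, hpV⟩

lemma msupp_fst' {X : Type*} [TopologicalSpace X] [MeasurableSpace X] [OpensMeasurableSpace X]
    {lam : Measure (X × X)} {μ : Measure X} (h : lam.map Prod.fst = μ) {p : X × X}
    (hp : p ∈ msupp lam) : p.1 ∈ msupp μ := by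
  intro U hU hpU
  have := hp (Prod.fst ⁻¹' U) (hU.preimage continuous_fst) hpU
  rwa [← h, Measure.map_apply measurable_fst hU.measurableSet]

lemma msupp_snd' {X : Type*} [TopologicalSpace X] [MeasurableSpace X] [OpensMeasurableSpace X]
    {lam : Measure (X × X)} {ν : Measure X} (h : lam.map Prod.snd = ν) {p : X × X}
    (hp : p ∈ msupp lam) : p.2 ∈ msupp ν := by
  intro U hU hpU
  have := hp (Prod.snd ⁻¹' U) (hU.preimage continuous_snd) hpU
  rwa [← h, Measure.map_apply measurable_snd hU.measurableSet]

end Aux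

theorem stmt6 (n : ℕ) (c : ℝ → ℝ) (L : NNReal)
    (hc0 : c 0 = 0) (hcpos : ∀ s : ℝ, 0 < s → 0 < c s) (hcmono : Monotone c)
    (hcbdd : ∃ M, ∀ s, c s ≤ M) (hconc : ConcaveOn ℝ (Ici 0) c)
    (hlip : LipschitzOnWith L c (Ici 0)) (hC1 : ContDiffOn ℝ 1 c (Ici 0))
    (μ ν : Measure (EuclideanSpace ℝ (Fin n))) [IsFiniteMeasure μ] [IsFiniteMeasure ν]
    (hmass : μ univ = ν univ)
    (hsing : μ ⟂ₘ ν) (hμac : μ ≪ volume) (hνac : ν ≪ volume)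
    -- `v` is a Kantorovich potential for the cost `c(|x-y|)`
    (v : EuclideanSpace ℝ (Fin n) → ℝ)
    (hv_lip : ∀ x y, |v x - v y| ≤ c ‖x - y‖)
    (hv_pot : ∃ lam, IsCoupling lam μ ν ∧
      (∀ lam', IsCoupling lam' μ ν →
        ∫ p, c ‖p.1 - p.2‖ ∂lam ≤ ∫ p, c ‖p.1 - p.2‖ ∂lam') ∧
      (∀ p ∈ msupp lam, v p.1 - v p.2 = c ‖p.1 - p.2‖))
    (b : EuclideanSpace ℝ (Fin n) → EuclideanSpace ℝ (Fin n))
    (hbμ : Integrable b μ) (hbν : Integrable b ν)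
    (S : ℝ)
    (hS : ∀ x ∈ msupp μ ∪ msupp ν, ∀ y ∈ msupp μ ∪ msupp ν, x ≠ y →
      |derivWithin c (Ici 0) ‖x - y‖ * ⟪b x - b y, (‖x - y‖)⁻¹ • (x - y)⟫| ≤ S) :
    |∫ x, ⟪b x, gradient v x⟫ ∂μ - ∫ x, ⟪b x, gradient v x⟫ ∂ν| ≤
      min (μ univ).toReal (ν univ).toReal * S := by
  classical
  obtain ⟨lam, ⟨hfst, hsnd⟩, _, hpot⟩ := hv_pot
  have hlamuniv : lam univ = μ univ := by
    rw [← hfst, Measure.map_apply measurable_fst MeasurableSet.univ]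
    simp
  haveI : IsFiniteMeasure lam := ⟨by rw [hlamuniv]; exact measure_lt_top μ univ⟩
  -- v is Lipschitz
  have hvL : LipschitzWith L v := by
    apply LipschitzWith.of_dist_le_mul
    intro x y
    have h1 := hv_lip x y
    have h2 : c ‖x - y‖ ≤ (L : ℝ) * ‖x - y‖ := by
      have hd := hlip.dist_le_mul ‖x - y‖ (mem_Ici.2 (norm_nonneg _)) 0 self_mem_Ici
      rw [Real.dist_eq, Real.dist_eq, hc0, sub_zero, sub_zero] at hd
      have hnn : 0 ≤ c ‖x - y‖ := by rw [← hc0]; exact hcmono (norm_nonneg _)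
      rwa [abs_of_nonneg hnn, abs_of_nonneg (norm_nonneg _)] at hd
    rw [Real.dist_eq, dist_eq_norm]
    exact h1.trans h2
  -- gradient is bounded by L
  have hGle : ∀ x, ‖gradient v x‖ ≤ (L : ℝ) := by
    intro x
    rw [gradient, LinearIsometryEquiv.norm_map]
    exact norm_fderiv_le_of_lipschitz ℝ hvL
  -- gradient is measurable
  have hGmeas : Measurable (gradient v) := by
    have : gradient v = fun x => (InnerProductSpace.toDual ℝ (EuclideanSpace ℝ (Fin n))).symm (fderiv ℝ v x) := rfl
    rw [this]
    exact ((InnerProductSpace.toDual ℝ (EuclideanSpace ℝ (Fin n))).symm.continuous.measurable).comp (measurable_fderiv ℝ v)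
  set f : EuclideanSpace ℝ (Fin n) → ℝ := fun x => ⟪b x, gradient v x⟫ with hf
  -- measurability and integrability of f
  have hmeas : ∀ (m : Measure (EuclideanSpace ℝ (Fin n))), Integrable b m → AEStronglyMeasurable f m := by
    intro m hbm
    exact (AEMeasurable.inner hbm.1.aemeasurable hGmeas.aemeasurable).aestronglyMeasurable
  have hint : ∀ (m : Measure (EuclideanSpace ℝ (Fin n))), Integrable b m → Integrable f m := by
    intro m hbm
    refine ((hbm.norm.const_mul (L : ℝ))).mono' (hmeas m hbm) ?_
    filter_upwards with x
    rw [Real.norm_eq_abs]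
    calc |⟪b x, gradient v x⟫| ≤ ‖b x‖ * ‖gradient v x‖ := abs_real_inner_le_norm _ _
      _ ≤ ‖b x‖ * L := mul_le_mul_of_nonneg_left (hGle x) (norm_nonneg _)
      _ = (L : ℝ) * ‖b x‖ := mul_comm _ _
  -- transfer the integrals through the coupling
  have hμeq : ∫ x, f x ∂μ = ∫ p : (EuclideanSpace ℝ (Fin n)) × (EuclideanSpace ℝ (Fin n)), f p.1 ∂lam := by
    rw [← hfst]
    exact integral_map measurable_fst.aemeasurable (by rw [hfst]; exact hmeas μ hbμ)
  have hνeq : ∫ x, f x ∂ν = ∫ p : (EuclideanSpace ℝ (Fin n)) × (EuclideanSpace ℝ (Fin n)), f p.2 ∂lam := by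
    rw [← hsnd]
    exact integral_map measurable_snd.aemeasurable (by rw [hsnd]; exact hmeas ν hbν)
  have hint1 : Integrable (fun p : (EuclideanSpace ℝ (Fin n)) × (EuclideanSpace ℝ (Fin n)) => f p.1) lam := by
    have := (integrable_map_measure (by rw [hfst]; exact hmeas μ hbμ)
      measurable_fst.aemeasurable).mp (by rw [hfst]; exact hint μ hbμ)
    exact this
  have hint2 : Integrable (fun p : (EuclideanSpace ℝ (Fin n)) × (EuclideanSpace ℝ (Fin n)) => f p.2) lam := by
    have := (integrable_map_measure (by rw [hsnd]; exact hmeas ν hbν)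
      measurable_snd.aemeasurable).mp (by rw [hsnd]; exact hint ν hbν)
    exact this
  -- a.e. facts on lam
  have hsupp : ∀ᵐ p ∂lam, p ∈ msupp lam := ae_mem_msupp' lam
  have hne : ∀ᵐ p ∂lam, p.1 ≠ p.2 := by
    obtain ⟨s, hsm, hμs, hνs⟩ := hsing
    have n1 : lam (Prod.fst ⁻¹' s) = 0 := by
      rw [← Measure.map_apply measurable_fst hsm, hfst]; exact hμs
    have n2 : lam (Prod.snd ⁻¹' sᶜ) = 0 := by
      rw [← Measure.map_apply measurable_snd hsm.compl, hsnd]; exact hνs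
    rw [ae_iff]
    refine measure_mono_null ?_ (measure_union_null n1 n2)
    intro p hp
    simp only [mem_setOf_eq, not_not] at hp
    by_cases hps : p.1 ∈ s
    · exact Or.inl hps
    · exact Or.inr (by simp only [mem_preimage, mem_compl_iff]; rw [← hp]; exact hps)
  have hDm : MeasurableSet {x : EuclideanSpace ℝ (Fin n) | DifferentiableAt ℝ v x} :=
    measurableSet_of_differentiableAt ℝ v
  have hvol : ∀ᵐ x ∂(volume : Measure (EuclideanSpace ℝ (Fin n))), DifferentiableAt ℝ v x := hvL.ae_differentiableAt
  have hd1 : ∀ᵐ p : (EuclideanSpace ℝ (Fin n)) × (EuclideanSpace ℝ (Fin n)) ∂lam, DifferentiableAt ℝ v p.1 := by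
    have hμae : μ {x : EuclideanSpace ℝ (Fin n) | DifferentiableAt ℝ v x}ᶜ = 0 := by
      apply hμac
      rw [compl_setOf]
      exact ae_iff.1 hvol
    rw [ae_iff]
    have : {p : (EuclideanSpace ℝ (Fin n)) × (EuclideanSpace ℝ (Fin n)) | ¬DifferentiableAt ℝ v p.1} = Prod.fst ⁻¹' {x | DifferentiableAt ℝ v x}ᶜ := by
      ext p; simp [mem_preimage]
    rw [this, ← Measure.map_apply measurable_fst hDm.compl, hfst]
    exact hμae
  have hd2 : ∀ᵐ p : (EuclideanSpace ℝ (Fin n)) × (EuclideanSpace ℝ (Fin n)) ∂lam, DifferentiableAt ℝ v p.2 := by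
    have hνae : ν {x : EuclideanSpace ℝ (Fin n) | DifferentiableAt ℝ v x}ᶜ = 0 := by
      apply hνac
      rw [compl_setOf]
      exact ae_iff.1 hvol
    rw [ae_iff]
    have : {p : (EuclideanSpace ℝ (Fin n)) × (EuclideanSpace ℝ (Fin n)) | ¬DifferentiableAt ℝ v p.2} = Prod.snd ⁻¹' {x | DifferentiableAt ℝ v x}ᶜ := by
      ext p; simp [mem_preimage]
    rw [this, ← Measure.map_apply measurable_snd hDm.compl, hsnd]
    exact hνae
  -- the pointwise bound
  have hbound : ∀ᵐ p : (EuclideanSpace ℝ (Fin n)) × (EuclideanSpace ℝ (Fin n)) ∂lam, ‖f p.1 - f p.2‖ ≤ S := by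
    filter_upwards [hsupp, hne, hd1, hd2] with p hp hne12 hdx hdy
    set x := p.1
    set y := p.2
    have heq : v x - v y = c ‖x - y‖ := hpot p hp
    have g1 : gradient v x = derivWithin c (Ici 0) ‖x - y‖ • (‖x - y‖⁻¹ • (x - y)) :=
      gradient_eq_fst' hC1 hne12 (fun z => (le_abs_self _).trans (hv_lip z y)) heq hdx
    have g2 : gradient v y = derivWithin c (Ici 0) ‖x - y‖ • (‖x - y‖⁻¹ • (x - y)) :=
      gradient_eq_snd' hC1 hne12 (fun z => (le_abs_self _).trans (hv_lip x z)) heq hdy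
    have hfeq : f x - f y = derivWithin c (Ici 0) ‖x - y‖ * ⟪b x - b y, (‖x - y‖)⁻¹ • (x - y)⟫ := by
      simp only [hf]
      rw [g1, g2]
      simp only [inner_sub_left, real_inner_smul_right]
      ring
    rw [Real.norm_eq_abs, hfeq]
    exact hS x (Or.inl (msupp_fst' hfst hp)) y (Or.inr (msupp_snd' hsnd hp)) hne12
  -- conclude
  have hfinal : |∫ x, f x ∂μ - ∫ x, f x ∂ν| ≤ S * (lam univ).toReal := by
    rw [hμeq, hνeq, ← integral_sub hint1 hint2, ← Real.norm_eq_abs]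
    exact norm_integral_le_of_norm_le_const hbound
  have hmin : min (μ univ).toReal (ν univ).toReal = (lam univ).toReal := by
    rw [hlamuniv, hmass, min_self]
  calc |∫ x, ⟪b x, gradient v x⟫ ∂μ - ∫ x, ⟪b x, gradient v x⟫ ∂ν|
      = |∫ x, f x ∂μ - ∫ x, f x ∂ν| := rfl
    _ ≤ S * (lam univ).toReal := hfinal
    _ = min (μ univ).toReal (ν univ).toReal * S := by rw [hmin, mul_comm]

end
end

section
/- Define f(x,y) = log(x²+y²)·log(−log(x²+y²)) on a small punctured neighborhood of the origin in ℝ², and let b(x,y) = (x·f(x,y), y·f(x,y)). Then b satisfies an Osgood modulus of continuity: there exist C>0 and r>0 such that |b(p)−b(q)| ≤ C·ω(|p−q|) for all p,q in the ball of radius r, where ω(δ) = δ·log(1/δ²)·log(log(1/δ²)), and ∫_0^{1/10} dδ/ω(δ) = ∞. -/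
open MeasureTheory Set

lemma exp4lt : Real.exp 4 ≤ 100 := by
  have h := Real.exp_one_lt_d9
  have h0 := Real.exp_pos 1
  have he : Real.exp 4 = (Real.exp 1)^4 := by
    rw [← Real.exp_nat_mul]; norm_num
  have hp : (Real.exp 1)^4 < 2.7182818286^4 := by
    exact pow_lt_pow_left₀ h h0.le (by norm_num)
  have : (2.7182818286:ℝ)^4 ≤ 100 := by norm_num
  linarith
  
lemma logOneOverSqBig {δ : ℝ} (h1 : 0 < δ) (h2 : δ < 1/10) :
    4 < Real.log (1 / δ ^ 2) := by
  have h100 : (100:ℝ) < 1 / δ ^ 2 := by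
    rw [lt_div_iff₀ (by positivity)]
    nlinarith
  have h4 : Real.log 100 ≥ 4 := by
    rw [ge_iff_le, Real.le_log_iff_exp_le (by norm_num)]
    exact exp4lt
  have := Real.log_lt_log (by norm_num) h100
  linarith

lemma wpos {δ : ℝ} (h1 : 0 < δ) (h2 : δ < 1/10) :
    0 < δ * Real.log (1 / δ ^ 2) * Real.log (Real.log (1 / δ ^ 2)) := by
  have hL := logOneOverSqBig h1 h2
  have hLL : 0 < Real.log (Real.log (1/δ^2)) := Real.log_pos (by linarith)
  have : (0:ℝ) < Real.log (1/δ^2) := by linarith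
  positivity

lemma log_one_div_sq {δ : ℝ} (h : δ ≠ 0) : Real.log (1/δ^2) = -2 * Real.log δ := by
  rw [one_div, Real.log_inv, Real.log_pow]; push_cast; ring

noncomputable def Gfun : ℝ → ℝ := fun x => Real.log (Real.log (-2 * Real.log x))

lemma Gderiv {δ : ℝ} (h1 : 0 < δ) (h2 : δ ≤ 1/10) :
    HasDerivAt Gfun (-2 * (1 / (δ * Real.log (1/δ^2) * Real.log (Real.log (1/δ^2))))) δ := by
  have hδne : δ ≠ 0 := h1.ne'
  have hlog : Real.log δ < 0 := Real.log_neg h1 (by linarith)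
  have hu : 4 ≤ -2 * Real.log δ := by
    have h100 : (100:ℝ) ≤ 1 / δ ^ 2 := by
      rw [le_div_iff₀ (by positivity)]; nlinarith
    have h4 : Real.log 100 ≥ 4 := by
      rw [ge_iff_le, Real.le_log_iff_exp_le (by norm_num)]; exact exp4lt
    have := Real.log_le_log (by norm_num) h100
    rw [log_one_div_sq hδne] at this; linarith
  have hune : -2 * Real.log δ ≠ 0 := by linarith
  have hlogu : 0 < Real.log (-2 * Real.log δ) := Real.log_pos (by linarith)
  have hd1 : HasDerivAt (fun x : ℝ => -2 * Real.log x) (-2 * δ⁻¹) δ :=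
    (Real.hasDerivAt_log hδne).const_mul (-2)
  have hd2 := hd1.log hune
  have hd3 := hd2.log hlogu.ne'
  convert hd3 using 1
  case e'_8 => rfl
  rw [log_one_div_sq hδne]
  field_simp

noncomputable def wfun : ℝ → ℝ := fun δ => δ * Real.log (1/δ^2) * Real.log (Real.log (1/δ^2))

lemma part2 : ¬ IntegrableOn (fun δ => 1 / wfun δ) (Ioo 0 (1/10)) := by
  intro h
  set M := ∫ x in Ioo (0:ℝ) (1/10), 1 / wfun x with hM
  have key : ∀ a : ℝ, 0 < a → a < 1/10 → Gfun a ≤ Gfun (1/10) + 2 * M := by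
    intro a ha ha'
    have hle : a ≤ 1/10 := ha'.le
    have hderiv : ∀ x ∈ uIcc a (1/10), HasDerivAt Gfun (-2 * (1 / wfun x)) x := by
      intro x hx
      rw [uIcc_of_le hle] at hx
      exact Gderiv (lt_of_lt_of_le ha hx.1) hx.2
    have hIoo : IntegrableOn (fun δ => 1/wfun δ) (Ioo a (1/10)) volume :=
      h.mono_set (Ioo_subset_Ioo ha.le le_rfl)
    have hIoc : IntegrableOn (fun δ => 1/wfun δ) (Ioc a (1/10)) volume :=
      (integrableOn_Ioc_iff_integrableOn_Ioo (hb := enorm_ne_top)).mpr hIoo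
    have hInt : IntervalIntegrable (fun x => -2 * (1/wfun x)) volume a (1/10) := by
      rw [intervalIntegrable_iff_integrableOn_Ioc_of_le hle]
      exact hIoc.const_mul (-2)
    have heq := intervalIntegral.integral_eq_sub_of_hasDerivAt hderiv hInt
    rw [intervalIntegral.integral_const_mul] at heq
    have hIle : ∫ x in a..(1/10), 1 / wfun x ≤ M := by
      rw [intervalIntegral.integral_of_le hle, hM]
      have hnonneg : 0 ≤ᵐ[volume.restrict (Ioo (0:ℝ) (1/10))] fun x => 1 / wfun x := by
        rw [Filter.EventuallyLE, ae_restrict_iff' measurableSet_Ioo]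
        refine ae_of_all _ (fun x hx => ?_)
        exact one_div_nonneg.mpr (wpos hx.1 hx.2).le
      refine setIntegral_mono_set h hnonneg ?_
      exact (Filter.EventuallyEq.le (Ioo_ae_eq_Ioc).symm).trans
        ((Ioo_subset_Ioo ha.le le_rfl).eventuallyLE)
    linarith
  set K := max (Gfun (1/10) + 2*M) 3 + 1 with hK
  set a := Real.exp (-(Real.exp (Real.exp K))/2) with haa
  have hKge : 4 ≤ K := by
    have := le_max_right (Gfun (1/10) + 2*M) 3
    simp only [hK]; linarith
  have ha : 0 < a := Real.exp_pos _
  have hbig : 20 ≤ Real.exp (Real.exp K) := by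
    have h1 : (4:ℝ) ≤ Real.exp K := by
      have := Real.add_one_le_exp K; linarith
    have h2 : Real.exp 4 ≤ Real.exp (Real.exp K) := Real.exp_le_exp.mpr h1
    have h3 : (2.7182818283:ℝ)^4 ≤ (Real.exp 1)^4 :=
      pow_le_pow_left₀ (by norm_num) Real.exp_one_gt_d9.le 4
    have h4 : Real.exp 4 = (Real.exp 1)^4 := by rw [← Real.exp_nat_mul]; norm_num
    nlinarith
  have ha10 : a < 1/10 := by
    rw [show (1/10:ℝ) = Real.exp (Real.log (1/10)) from (Real.exp_log (by norm_num)).symm]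
    apply Real.exp_lt_exp.mpr
    have hlog10 : Real.log (1/10) = -Real.log 10 := by rw [one_div, Real.log_inv]
    have h9 : Real.log 10 ≤ 9 := by
      have := Real.log_le_sub_one_of_pos (by norm_num : (0:ℝ) < 10); linarith
    rw [hlog10]; linarith
  have hGa : Gfun a = K := by
    simp only [Gfun, haa]
    rw [Real.log_exp]
    rw [show -2 * (-(Real.exp (Real.exp K))/2) = Real.exp (Real.exp K) by ring]
    rw [Real.log_exp, Real.log_exp]
  have hcon := key a ha ha10
  rw [hGa] at hcon
  have : Gfun (1/10) + 2*M < K := by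
    have := le_max_left (Gfun (1/10) + 2*M) 3
    simp only [hK]; linarith
  linarith



lemma exp_sq_lt : Real.exp 2 < 8 := by
  have h := Real.exp_one_lt_d9
  have h0 := Real.exp_pos 1
  have : Real.exp 2 = (Real.exp 1)^2 := by rw [← Real.exp_nat_mul]; norm_num
  nlinarith

lemma expneg4_lt : Real.exp (-4) < 1/10 := by
  have h := Real.exp_one_gt_d9
  have h4 : Real.exp 4 = (Real.exp 1)^4 := by rw [← Real.exp_nat_mul]; norm_num
  have h10 : (10:ℝ) < Real.exp 4 := by
    have hp : (2.7182818283:ℝ)^4 ≤ (Real.exp 1)^4 := pow_le_pow_left₀ (by norm_num) h.le 4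
    have : (10:ℝ) < (2.7182818283:ℝ)^4 := by norm_num
    linarith [h4 ▸ hp]
  rw [Real.exp_neg]
  rw [inv_lt_comm₀ (Real.exp_pos 4) (by norm_num)]
  simpa using h10

lemma Lfacts {t : ℝ} (h0 : 0 < t) (h : t < Real.exp (-4)) :
    8 ≤ Real.log (1/t^2) ∧ 2 ≤ Real.log (Real.log (1/t^2)) := by
  have hlt : Real.log t < -4 := by
    rw [← Real.log_exp (-4)]
    exact Real.log_lt_log h0 h
  have hL : 8 ≤ Real.log (1/t^2) := by rw [log_one_div_sq h0.ne']; linarith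
  refine ⟨hL, ?_⟩
  have : Real.exp 2 ≤ Real.log (1/t^2) := le_trans exp_sq_lt.le hL
  rw [← Real.log_exp 2]
  exact Real.log_le_log (Real.exp_pos 2) this

lemma Lanti {t u : ℝ} (h0 : 0 < t) (htu : t ≤ u) (hu : u < Real.exp (-4)) :
    Real.log (1/u^2) ≤ Real.log (1/t^2) ∧
    Real.log (Real.log (1/u^2)) ≤ Real.log (Real.log (1/t^2)) := by
  have hu0 : 0 < u := lt_of_lt_of_le h0 htu
  have h1 : (0:ℝ) < 1/u^2 := by positivity
  have h2 : 1/u^2 ≤ 1/t^2 := by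
    apply one_div_le_one_div_of_le (by positivity)
    nlinarith
  have hL := Real.log_le_log h1 h2
  have h8 := (Lfacts hu0 hu).1
  exact ⟨hL, Real.log_le_log (by linarith) hL⟩


lemma gmono : StrictMonoOn (fun t : ℝ => t * (-2 * Real.log t) * Real.log (-2 * Real.log t))
    (Ioo 0 (Real.exp (-4))) := by
  apply strictMonoOn_of_deriv_pos (convex_Ioo _ _)
  · -- continuity
    intro t ht
    have ht0 : t ≠ 0 := ht.1.ne'
    have hlt : Real.log t < -4 := by
      rw [← Real.log_exp (-4)]; exact Real.log_lt_log ht.1 ht.2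
    have hune : -2 * Real.log t ≠ 0 := by nlinarith
    have h1 : ContinuousAt (fun t : ℝ => -2 * Real.log t) t :=
      continuousAt_const.mul (Real.continuousAt_log ht0)
    have h2 : ContinuousAt (fun t : ℝ => Real.log (-2 * Real.log t)) t :=
      ContinuousAt.log h1 hune
    exact ((continuousAt_id.mul h1).mul h2).continuousWithinAt
  · intro t ht
    rw [interior_Ioo] at ht
    have ht0 : t ≠ 0 := ht.1.ne'
    have hlt : Real.log t < -4 := by
      rw [← Real.log_exp (-4)]; exact Real.log_lt_log ht.1 ht.2
    have hu : (8:ℝ) < -2 * Real.log t := by linarith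
    have hune : -2 * Real.log t ≠ 0 := by linarith
    have hlogu : 2 < Real.log (-2 * Real.log t) :=
      (Real.lt_log_iff_exp_lt (by linarith)).mpr (lt_trans exp_sq_lt hu)
    have hd1 : HasDerivAt (fun x : ℝ => -2 * Real.log x) (-2 * t⁻¹) t :=
      (Real.hasDerivAt_log ht0).const_mul (-2)
    have hA : HasDerivAt (fun x : ℝ => x * (-2 * Real.log x))
        (1 * (-2 * Real.log t) + t * (-2 * t⁻¹)) t := (hasDerivAt_id t).mul hd1
    have hB : HasDerivAt (fun x : ℝ => Real.log (-2 * Real.log x))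
        ((-2 * t⁻¹) / (-2 * Real.log t)) t := hd1.log hune
    have hg := hA.mul hB
    rw [HasDerivAt.deriv (f := fun t => t * (-2 * Real.log t) * Real.log (-2 * Real.log t)) hg]
    have hc : t * (-2 * Real.log t) * (-2 * t⁻¹ / (-2 * Real.log t)) = -2 := by
      have e : t * (-2 * Real.log t) * (-2 * t⁻¹ / (-2 * Real.log t)) =
          (t * t⁻¹) * ((-2 * Real.log t) / (-2 * Real.log t)) * (-2) := by ring
      rw [e, mul_inv_cancel₀ ht0, div_self hune]; ring
    have ha' : t * (-2 * t⁻¹) = -2 := by field_simp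
    rw [hc, ha']
    nlinarith

lemma wmono {t s : ℝ} (ht : 0 < t) (hts : t ≤ s) (hs : s < Real.exp (-4)) :
    wfun t ≤ wfun s := by
  have hs0 : 0 < s := lt_of_lt_of_le ht hts
  have e1 : wfun t = t * (-2 * Real.log t) * Real.log (-2 * Real.log t) := by
    rw [wfun, log_one_div_sq ht.ne']
  have e2 : wfun s = s * (-2 * Real.log s) * Real.log (-2 * Real.log s) := by
    rw [wfun, log_one_div_sq hs0.ne']
  rw [e1, e2]
  exact gmono.monotoneOn ⟨ht, lt_of_le_of_lt hts hs⟩ ⟨hs0, hs⟩ hts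

lemma wcomp {δ : ℝ} (h0 : 0 < δ) (h : 3*δ < Real.exp (-4)) :
    wfun (3*δ) ≤ 3 * wfun δ := by
  have h30 : 0 < 3*δ := by linarith
  obtain ⟨hL3, hLL3⟩ := Lfacts h30 h
  have hδe : δ < Real.exp (-4) := by linarith
  obtain ⟨hL, hLL⟩ := Lanti h0 (by linarith : δ ≤ 3*δ) h
  simp only [wfun]
  have h1 : (3*δ) * Real.log (1/(3*δ)^2) ≤ 3 * (δ * Real.log (1/δ^2)) := by nlinarith
  have h2 : 0 ≤ (3*δ) * Real.log (1/(3*δ)^2) := by nlinarith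
  nlinarith

section Part1

local notation "E" => EuclideanSpace ℝ (Fin 2)

noncomputable def Bfun : EuclideanSpace ℝ (Fin 2) → EuclideanSpace ℝ (Fin 2) :=
  fun y => (Real.log (‖y‖^2) * Real.log (-Real.log (‖y‖^2))) • y

lemma bnorm (x : E) (hx : ‖x‖ < Real.exp (-4)) : ‖Bfun x‖ = wfun ‖x‖ := by
  rcases eq_or_ne x 0 with rfl|hne
  · simp [Bfun, wfun]
  · have hx0 : (0:ℝ) < ‖x‖ := norm_pos_iff.mpr hne
    have hlx : Real.log ‖x‖ < -4 := by
      rw [← Real.log_exp (-4)]; exact Real.log_lt_log hx0 hx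
    have hsq : Real.log (‖x‖^2) = 2 * Real.log ‖x‖ := by
      rw [Real.log_pow]; push_cast; ring
    have hLL : 0 < Real.log (-Real.log (‖x‖^2)) := by
      apply Real.log_pos; rw [hsq]; linarith
    have hc : Real.log (‖x‖^2) * Real.log (-Real.log (‖x‖^2)) < 0 := by
      apply mul_neg_of_neg_of_pos _ hLL
      rw [hsq]; linarith
    rw [Bfun, norm_smul, Real.norm_eq_abs, abs_of_neg hc, wfun,
        log_one_div_sq hx0.ne', hsq]
    rw [show -(2 * Real.log ‖x‖) = -2 * Real.log ‖x‖ from by ring]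
    ring


lemma bderiv (x : E) (hne : x ≠ 0) (hx : ‖x‖ < Real.exp (-4)) :
    ∃ D : EuclideanSpace ℝ (Fin 2) →L[ℝ] EuclideanSpace ℝ (Fin 2), HasFDerivAt Bfun D x ∧
      ‖D‖ ≤ 2 * Real.log (1/‖x‖^2) * Real.log (Real.log (1/‖x‖^2)) := by
  have hx0 : (0:ℝ) < ‖x‖ := norm_pos_iff.mpr hne
  have hlx : Real.log ‖x‖ < -4 := by
    rw [← Real.log_exp (-4)]; exact Real.log_lt_log hx0 hx
  have hs0 : (0:ℝ) < ‖x‖^2 := by positivity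
  have hsq : Real.log (‖x‖^2) = 2 * Real.log ‖x‖ := by
    rw [Real.log_pow]; push_cast; ring
  have hlogs : Real.log (‖x‖^2) < -8 := by rw [hsq]; linarith
  have hL8 : (8:ℝ) < -Real.log (‖x‖^2) := by linarith
  have hLne : -Real.log (‖x‖^2) ≠ 0 := by linarith
  have hLL2 : (2:ℝ) < Real.log (-Real.log (‖x‖^2)) :=
    (Real.lt_log_iff_exp_lt (by linarith)).mpr (lt_trans exp_sq_lt hL8)
  have hφ : HasDerivAt (fun u : ℝ => Real.log u * Real.log (-Real.log u))
      ((‖x‖^2)⁻¹ * Real.log (-Real.log (‖x‖^2)) +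
        Real.log (‖x‖^2) * (-(‖x‖^2)⁻¹ / -Real.log (‖x‖^2))) (‖x‖^2) :=
    (Real.hasDerivAt_log hs0.ne').mul
      (HasDerivAt.log (Real.hasDerivAt_log hs0.ne').neg hLne)
  have hn : HasFDerivAt (fun y : EuclideanSpace ℝ (Fin 2) => ‖y‖^2) (2 • (innerSL ℝ x)) x :=
    (hasStrictFDerivAt_norm_sq x).hasFDerivAt
  have hcomp := hφ.comp_hasFDerivAt x hn
  have hB := hcomp.smul (hasFDerivAt_id x)
  simp only [Function.comp, id_eq] at hB
  refine ⟨_, hB, ?_⟩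
  have hφ'eq : (‖x‖^2)⁻¹ * Real.log (-Real.log (‖x‖^2)) +
      Real.log (‖x‖^2) * (-(‖x‖^2)⁻¹ / -Real.log (‖x‖^2)) =
      (‖x‖^2)⁻¹ * (Real.log (-Real.log (‖x‖^2)) + 1) := by
    rw [neg_div_neg_eq]
    rw [show Real.log (‖x‖^2) * ((‖x‖^2)⁻¹ / Real.log (‖x‖^2)) =
      (Real.log (‖x‖^2) / Real.log (‖x‖^2)) * (‖x‖^2)⁻¹ from by ring]
    rw [div_self (by linarith : Real.log (‖x‖^2) ≠ 0)]
    ring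
  have habsc : |Real.log (‖x‖^2) * Real.log (-Real.log (‖x‖^2))| =
      (-Real.log (‖x‖^2)) * Real.log (-Real.log (‖x‖^2)) := by
    have hc : Real.log (‖x‖^2) * Real.log (-Real.log (‖x‖^2)) < 0 :=
      mul_neg_of_neg_of_pos (by linarith) (by linarith)
    rw [abs_of_neg hc]; ring
  have h1 : ‖(Real.log (‖x‖^2) * Real.log (-Real.log (‖x‖^2))) •
      (ContinuousLinearMap.id ℝ (EuclideanSpace ℝ (Fin 2)))‖
      ≤ (-Real.log (‖x‖^2)) * Real.log (-Real.log (‖x‖^2)) := by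
    refine le_trans (ContinuousLinearMap.opNorm_smul_le _ _) ?_
    rw [Real.norm_eq_abs, habsc]
    have hidle : ‖ContinuousLinearMap.id ℝ (EuclideanSpace ℝ (Fin 2))‖ ≤ 1 :=
      ContinuousLinearMap.norm_id_le
    have hpos : 0 ≤ (-Real.log (‖x‖^2)) * Real.log (-Real.log (‖x‖^2)) := by nlinarith
    nlinarith [norm_nonneg (ContinuousLinearMap.id ℝ (EuclideanSpace ℝ (Fin 2)))]
  have hA : ‖(2:ℕ) • (innerSL ℝ x)‖ ≤ 2 * ‖x‖ := by
    rw [two_smul]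
    refine le_trans (norm_add_le _ _) ?_
    rw [innerSL_apply_norm]
    ring_nf
    exact le_rfl
  have h2 : ‖(((‖x‖^2)⁻¹ * Real.log (-Real.log (‖x‖^2)) +
      Real.log (‖x‖^2) * (-(‖x‖^2)⁻¹ / -Real.log (‖x‖^2))) •
      ((2:ℕ) • (innerSL ℝ x))).smulRight x‖ ≤ 2 * (Real.log (-Real.log (‖x‖^2)) + 1) := by
    rw [ContinuousLinearMap.norm_smulRight_apply]
    refine le_trans (mul_le_mul_of_nonneg_right (ContinuousLinearMap.opNorm_smul_le _ _)
      (norm_nonneg x)) ?_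
    rw [Real.norm_eq_abs, hφ'eq]
    have habs : |(‖x‖^2)⁻¹ * (Real.log (-Real.log (‖x‖^2)) + 1)| =
        (‖x‖^2)⁻¹ * (Real.log (-Real.log (‖x‖^2)) + 1) := by
      apply abs_of_pos
      have : (0:ℝ) < Real.log (-Real.log (‖x‖^2)) + 1 := by linarith
      positivity
    rw [habs]
    have hchain : (‖x‖^2)⁻¹ * (Real.log (-Real.log (‖x‖^2)) + 1) * ‖(2:ℕ) • (innerSL ℝ x)‖ * ‖x‖
        ≤ (‖x‖^2)⁻¹ * (Real.log (-Real.log (‖x‖^2)) + 1) * (2 * ‖x‖) * ‖x‖ := by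
      have hc : (0:ℝ) ≤ (‖x‖^2)⁻¹ * (Real.log (-Real.log (‖x‖^2)) + 1) := by
        have : (0:ℝ) < Real.log (-Real.log (‖x‖^2)) + 1 := by linarith
        positivity
      have := mul_le_mul_of_nonneg_left hA hc
      exact mul_le_mul_of_nonneg_right this (norm_nonneg x)
    refine le_trans hchain ?_
    have hx2 : (‖x‖^2)⁻¹ * ‖x‖ * ‖x‖ = 1 := by
      field_simp
    nlinarith [hx2, hx0]
  refine le_trans (norm_add_le _ _) ?_
  rw [one_div, Real.log_inv]
  nlinarith [h1, h2]

lemma wpos' {δ : ℝ} (h1 : 0 < δ) (h2 : δ < 1/10) : 0 < wfun δ := wpos h1 h2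

lemma part1 (p q : EuclideanSpace ℝ (Fin 2)) (hp : ‖p‖ < Real.exp (-4)/6)
    (hq : ‖q‖ < Real.exp (-4)/6) : ‖Bfun p - Bfun q‖ ≤ 6 * wfun ‖p - q‖ := by
  rcases eq_or_ne p q with rfl|hne
  · simp [wfun]
  have hδ0 : 0 < ‖p - q‖ := by rw [norm_pos_iff]; exact sub_ne_zero_of_ne hne
  set δ := ‖p - q‖ with hδdef
  have hε0 : (0:ℝ) < Real.exp (-4) := Real.exp_pos _
  have htri : δ ≤ ‖p‖ + ‖q‖ := norm_sub_le p q
  have hδlt : 3 * δ < Real.exp (-4) := by linarith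
  have hδ10 : δ < 1/10 := by linarith [expneg4_lt]
  have hwδ : 0 < wfun δ := wpos' hδ0 hδ10
  by_cases hmin : min ‖p‖ ‖q‖ < 2*δ
  · -- both points are close to the origin
    have hpq1 : ‖p‖ - ‖q‖ ≤ δ := by rw [hδdef]; exact norm_sub_norm_le p q
    have hpq2 : ‖q‖ - ‖p‖ ≤ δ := by
      rw [hδdef, ← norm_sub_rev]; exact norm_sub_norm_le q p
    have hp3 : ‖p‖ ≤ 3*δ ∧ ‖q‖ ≤ 3*δ := by
      rcases min_lt_iff.mp hmin with h|h <;> constructor <;> linarith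
    have h310 : 3*δ < 1/10 := by linarith [expneg4_lt]
    have key : ∀ x : EuclideanSpace ℝ (Fin 2), ‖x‖ ≤ 3*δ → ‖x‖ < Real.exp (-4) →
        ‖Bfun x‖ ≤ wfun (3*δ) := by
      intro x h3 hxe
      rw [bnorm x hxe]
      rcases eq_or_lt_of_le (norm_nonneg x) with h0|h0
      · rw [← h0]
        have : wfun 0 = 0 := by simp [wfun]
        rw [this]
        exact (wpos' (by linarith) h310).le
      · exact wmono h0 h3 hδlt
    have hc := wcomp hδ0 hδlt
    calc ‖Bfun p - Bfun q‖ ≤ ‖Bfun p‖ + ‖Bfun q‖ := norm_sub_le _ _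
      _ ≤ wfun (3*δ) + wfun (3*δ) :=
          add_le_add (key p hp3.1 (by linarith)) (key q hp3.2 (by linarith))
      _ ≤ 6 * wfun δ := by linarith
  · -- both points are far from the origin; use the mean value inequality
    push_neg at hmin
    have hminp : 2*δ ≤ ‖p‖ := le_trans hmin (min_le_left _ _)
    have hminq : 2*δ ≤ ‖q‖ := le_trans hmin (min_le_right _ _)
    have hseg : ∀ y ∈ segment ℝ q p, δ ≤ ‖y‖ ∧ ‖y‖ < Real.exp (-4) := by
      rintro y ⟨a, b, ha, hb, hab, rfl⟩
      have hb1 : b ≤ 1 := by linarith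
      constructor
      · have hrw : a • q + b • p = q + b • (p - q) := by
          have ha' : a = 1 - b := by linarith
          rw [ha', smul_sub, sub_smul, one_smul]; abel
        rw [hrw]
        have h2 : ‖b • (p - q)‖ = b * δ := by
          rw [norm_smul, Real.norm_eq_abs, abs_of_nonneg hb, hδdef]
        have h1 : ‖q‖ - ‖b • (p - q)‖ ≤ ‖q + b • (p - q)‖ := by
          have h3 := norm_add_le (q + b • (p - q)) (-(b • (p - q)))
          simp only [add_neg_cancel_right, norm_neg] at h3
          linarith
        rw [h2] at h1
        nlinarith
      · have h4 : ‖a • q + b • p‖ ≤ a * ‖q‖ + b * ‖p‖ := by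
          refine le_trans (norm_add_le _ _) ?_
          rw [norm_smul, norm_smul, Real.norm_eq_abs, Real.norm_eq_abs,
            abs_of_nonneg ha, abs_of_nonneg hb]
        nlinarith [norm_nonneg q, norm_nonneg p]
    have hex : ∀ y : EuclideanSpace ℝ (Fin 2),
        ∃ D : EuclideanSpace ℝ (Fin 2) →L[ℝ] EuclideanSpace ℝ (Fin 2),
        y ∈ segment ℝ q p → (HasFDerivAt Bfun D y ∧
          ‖D‖ ≤ 2 * Real.log (1/δ^2) * Real.log (Real.log (1/δ^2))) := by
      intro y
      by_cases hy : y ∈ segment ℝ q p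
      · obtain ⟨hy1, hy2⟩ := hseg y hy
        have hy0 : y ≠ 0 := by
          intro h
          rw [h, norm_zero] at hy1
          linarith
        obtain ⟨D, hDd, hDb⟩ := bderiv y hy0 hy2
        refine ⟨D, fun _ => ⟨hDd, le_trans hDb ?_⟩⟩
        obtain ⟨hLa, hLLa⟩ := Lanti hδ0 hy1 hy2
        obtain ⟨hL8, hLL2⟩ := Lfacts (lt_of_lt_of_le hδ0 hy1) hy2
        nlinarith
      · exact ⟨0, fun h => absurd h hy⟩
    choose D hD using hex
    have hmvt := Convex.norm_image_sub_le_of_norm_hasFDerivWithin_le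
      (f := Bfun) (f' := D) (s := segment ℝ q p)
      (fun y hy => ((hD y hy).1).hasFDerivWithinAt)
      (fun y hy => (hD y hy).2)
      (convex_segment q p) (left_mem_segment ℝ q p) (right_mem_segment ℝ q p)
    rw [← hδdef] at hmvt
    have hwrew : 2 * Real.log (1/δ^2) * Real.log (Real.log (1/δ^2)) * δ = 2 * wfun δ := by
      rw [wfun]; ring
    calc ‖Bfun p - Bfun q‖ ≤ 2 * Real.log (1/δ^2) * Real.log (Real.log (1/δ^2)) * δ := hmvt
      _ = 2 * wfun δ := hwrew
      _ ≤ 6 * wfun δ := by linarith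


theorem stmt13
    (f : EuclideanSpace ℝ (Fin 2) → ℝ)
    (hf : ∀ x, f x = Real.log (‖x‖ ^ 2) * Real.log (- Real.log (‖x‖ ^ 2)))
    (b : EuclideanSpace ℝ (Fin 2) → EuclideanSpace ℝ (Fin 2))
    (hb : ∀ x, ∀ i : Fin 2, b x i = x i * f x)
    (ω : ℝ → ℝ)
    (hω : ∀ δ : ℝ, ω δ = δ * Real.log (1 / δ ^ 2) * Real.log (Real.log (1 / δ ^ 2))) :
    (∃ C > (0:ℝ), ∃ r > (0:ℝ), ∀ p q : EuclideanSpace ℝ (Fin 2),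
      ‖p‖ < r → ‖q‖ < r → ‖b p - b q‖ ≤ C * ω ‖p - q‖) ∧
    ¬ IntegrableOn (fun δ => 1 / ω δ) (Ioo 0 (1/10)) := by
  have hωw : ω = wfun := funext fun d => hω d
  constructor
  · refine ⟨6, by norm_num, Real.exp (-4)/6, by positivity, ?_⟩
    intro p q hp hq
    have hbB : b = Bfun := by
      funext x; ext i
      rw [hb x i, hf x]
      simp [Bfun, PiLp.smul_apply, smul_eq_mul, mul_comm]
    rw [hbB, hωw]
    exact part1 p q hp hq
  · rw [hωw]
    exact part2

end Part1
end

section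
/- Let g(x,y) = log(x²+y²)·(log(−log(x²+y²)))² near the origin in ℝ² and b(x,y) = (x·g(x,y), −y·g(x,y)). Then div b(x,y) = 2·((x²−y²)/(x²+y²))·[(log(−log(x²+y²)))² + 2·log(−log(x²+y²))], and in particular there is a constant C>0 with |div b(x,y)| ≤ C·|log(x²+y²)| on a punctured neighborhood of the origin. -/
open MeasureTheory Set

theorem stmt15
    (g : ℝ × ℝ → ℝ)
    (hg : ∀ p : ℝ × ℝ, g p =
      Real.log (p.1 ^ 2 + p.2 ^ 2) * (Real.log (- Real.log (p.1 ^ 2 + p.2 ^ 2))) ^ 2)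
    (b : ℝ × ℝ → ℝ × ℝ)
    (hb : ∀ p : ℝ × ℝ, b p = (p.1 * g p, - p.2 * g p))
    (divb : ℝ × ℝ → ℝ)
    (hdiv : ∀ p : ℝ × ℝ, divb p =
      fderiv ℝ (fun q : ℝ × ℝ => (b q).1) p (1, 0) +
      fderiv ℝ (fun q : ℝ × ℝ => (b q).2) p (0, 1)) :
    ∃ r > (0:ℝ), ∃ C > (0:ℝ), ∀ p : ℝ × ℝ, p ≠ 0 → ‖p‖ < r →
      divb p = 2 * ((p.1 ^ 2 - p.2 ^ 2) / (p.1 ^ 2 + p.2 ^ 2)) *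
        ((Real.log (- Real.log (p.1 ^ 2 + p.2 ^ 2))) ^ 2 +
          2 * Real.log (- Real.log (p.1 ^ 2 + p.2 ^ 2))) ∧
      |divb p| ≤ C * |Real.log (p.1 ^ 2 + p.2 ^ 2)| := by
  refine ⟨1/3, by norm_num, 12, by norm_num, fun p hp hpr => ?_⟩
  obtain ⟨x, y⟩ := p
  simp only at *
  -- basic positivity facts
  have hxy : x ≠ 0 ∨ y ≠ 0 := by
    by_contra h
    push_neg at h
    exact hp (by simp [Prod.ext_iff, h.1, h.2])
  have hs0 : 0 < x ^ 2 + y ^ 2 := by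
    rcases hxy with h | h <;> positivity
  set s : ℝ := x ^ 2 + y ^ 2 with hs_def
  have hx_le : |x| ≤ ‖((x, y) : ℝ × ℝ)‖ := by
    simpa using norm_fst_le ((x, y) : ℝ × ℝ)
  have hy_le : |y| ≤ ‖((x, y) : ℝ × ℝ)‖ := by
    simpa using norm_snd_le ((x, y) : ℝ × ℝ)
  have hnorm0 : (0:ℝ) ≤ ‖((x, y) : ℝ × ℝ)‖ := norm_nonneg _
  have hx2 : x ^ 2 < (1/3)^2 := by
    nlinarith [sq_abs x, abs_nonneg x, lt_of_le_of_lt hx_le hpr]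
  have hy2 : y ^ 2 < (1/3)^2 := by
    nlinarith [sq_abs y, abs_nonneg y, lt_of_le_of_lt hy_le hpr]
  have hs_small : s < 2/9 := by
    rw [hs_def]; nlinarith
  have hexp : (2/9 : ℝ) < Real.exp (-1) := by
    rw [Real.exp_neg]
    have h1 : Real.exp 1 < 2.7182818286 := Real.exp_one_lt_d9
    have h2 : (0:ℝ) < Real.exp 1 := Real.exp_pos 1
    have h3 : Real.exp 1 * (Real.exp 1)⁻¹ = 1 := mul_inv_cancel₀ h2.ne'
    nlinarith
  have hlogs : Real.log s < -1 := by
    calc Real.log s < Real.log (Real.exp (-1)) :=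
          Real.log_lt_log hs0 (lt_trans hs_small hexp)
      _ = -1 := Real.log_exp _
  have hlogs_ne : Real.log s ≠ 0 := by linarith
  have ht1 : (1:ℝ) ≤ -Real.log s := by linarith
  have ht0 : (0:ℝ) < -Real.log s := by linarith
  set T : ℝ := Real.log (-Real.log s) with hT_def
  have hT0 : 0 ≤ T := Real.log_nonneg ht1
  -- derivative of the inner scalar function
  have hlog : HasDerivAt Real.log s⁻¹ s := Real.hasDerivAt_log hs0.ne'
  have hll : HasDerivAt (fun u => Real.log (-Real.log u)) (-s⁻¹ / -Real.log s) s := by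
    exact (hlog.neg).log (by simpa using hlogs_ne)
  have hsq : HasDerivAt (fun u => (Real.log (-Real.log u)) ^ 2)
      ((2:ℕ) * (Real.log (-Real.log s)) ^ 1 * (-s⁻¹ / -Real.log s)) s := hll.pow 2
  set G' : ℝ := s⁻¹ * T ^ 2 + Real.log s * ((2:ℕ) * T ^ 1 * (-s⁻¹ / -Real.log s)) with hG'_def
  have hG : HasDerivAt (fun u => Real.log u * (Real.log (-Real.log u)) ^ 2) G' s :=
    hlog.mul hsq
  -- derivative of s as a function of q
  have hfst : HasFDerivAt (fun q : ℝ × ℝ => q.1) (ContinuousLinearMap.fst ℝ ℝ ℝ) (x, y) :=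
    hasFDerivAt_fst
  have hsnd : HasFDerivAt (fun q : ℝ × ℝ => q.2) (ContinuousLinearMap.snd ℝ ℝ ℝ) (x, y) :=
    hasFDerivAt_snd
  set F : (ℝ × ℝ) →L[ℝ] ℝ := ContinuousLinearMap.fst ℝ ℝ ℝ with hF_def
  set Sn : (ℝ × ℝ) →L[ℝ] ℝ := ContinuousLinearMap.snd ℝ ℝ ℝ with hSn_def
  set D : (ℝ × ℝ) →L[ℝ] ℝ := (x • F + x • F) + (y • Sn + y • Sn) with hD_def
  have hS : HasFDerivAt (fun q : ℝ × ℝ => q.1 ^ 2 + q.2 ^ 2) D (x, y) := by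
    have := (hfst.mul hfst).add (hsnd.mul hsnd)
    have heq : (fun q : ℝ × ℝ => q.1 ^ 2 + q.2 ^ 2) =
        (((fun q : ℝ × ℝ => q.1) * fun q : ℝ × ℝ => q.1) +
          (fun q : ℝ × ℝ => q.2) * fun q : ℝ × ℝ => q.2) := by
      funext q; simp only [Pi.add_apply, Pi.mul_apply]; ring
    rw [heq]; exact this
  have hGS : HasFDerivAt
      (fun q : ℝ × ℝ => Real.log (q.1 ^ 2 + q.2 ^ 2) *
        (Real.log (-Real.log (q.1 ^ 2 + q.2 ^ 2))) ^ 2) (G' • D) (x, y) :=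
    by have := hG.comp_hasFDerivAt (x, y) hS; exact this
  -- derivative of the two components of b
  set Gs : ℝ := Real.log s * T ^ 2 with hGs_def
  have hb1 : HasFDerivAt (fun q : ℝ × ℝ => (b q).1)
      (x • (G' • D) + Gs • F) (x, y) := by
    have heq : (fun q : ℝ × ℝ => (b q).1) = fun q : ℝ × ℝ =>
        q.1 * (Real.log (q.1 ^ 2 + q.2 ^ 2) *
          (Real.log (-Real.log (q.1 ^ 2 + q.2 ^ 2))) ^ 2) := by
      funext q; rw [hb, hg]
    rw [heq]
    exact hfst.mul hGS
  have hb2 : HasFDerivAt (fun q : ℝ × ℝ => (b q).2)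
      ((-y) • (G' • D) + Gs • (-Sn)) (x, y) := by
    have heq : (fun q : ℝ × ℝ => (b q).2) = fun q : ℝ × ℝ =>
        (-q.2) * (Real.log (q.1 ^ 2 + q.2 ^ 2) *
          (Real.log (-Real.log (q.1 ^ 2 + q.2 ^ 2))) ^ 2) := by
      funext q; rw [hb, hg]
    rw [heq]
    exact (hsnd.neg).mul hGS
  -- compute divb
  have e1 : fderiv ℝ (fun q : ℝ × ℝ => (b q).1) (x, y) (1, 0) =
      x * (G' * (2 * x)) + Gs := by
    rw [hb1.fderiv]
    simp [hD_def, hF_def, hSn_def]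
    ring
  have e2 : fderiv ℝ (fun q : ℝ × ℝ => (b q).2) (x, y) (0, 1) =
      (-y) * (G' * (2 * y)) - Gs := by
    rw [hb2.fderiv]
    simp [hD_def, hF_def, hSn_def]
    ring
  have hdivp : divb (x, y) = 2 * (x ^ 2 - y ^ 2) * G' := by
    rw [hdiv, e1, e2]; ring
  have hG'val : G' = ((T ^ 2 + 2 * T) / s) := by
    rw [hG'_def]
    field_simp
    ring
  have key : divb (x, y) = 2 * ((x ^ 2 - y ^ 2) / s) * (T ^ 2 + 2 * T) := by
    rw [hdivp, hG'val]; ring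
  refine ⟨by simpa [hT_def, ← hs_def] using key, ?_⟩
  -- the bound
  have hT_sq : T ^ 2 ≤ 4 * (-Real.log s) := by
    have hsqrt1 : (1:ℝ) ≤ Real.sqrt (-Real.log s) := by
      rw [show (1:ℝ) = Real.sqrt 1 by simp]
      exact Real.sqrt_le_sqrt ht1
    have hTeq : T = 2 * Real.log (Real.sqrt (-Real.log s)) := by
      rw [hT_def, Real.log_sqrt ht0.le]; ring
    have hlsq : Real.log (Real.sqrt (-Real.log s)) ≤ Real.sqrt (-Real.log s) := by
      have := Real.log_le_sub_one_of_pos (show 0 < Real.sqrt (-Real.log s) by linarith)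
      linarith
    have hl0 : 0 ≤ Real.log (Real.sqrt (-Real.log s)) := Real.log_nonneg hsqrt1
    have hsq_eq : Real.sqrt (-Real.log s) ^ 2 = -Real.log s := Real.sq_sqrt ht0.le
    have hll2 : Real.log (Real.sqrt (-Real.log s)) ^ 2 ≤ Real.sqrt (-Real.log s) ^ 2 :=
      pow_le_pow_left₀ hl0 hlsq 2
    rw [hTeq]
    have hexpand : (2 * Real.log (Real.sqrt (-Real.log s))) ^ 2 =
        4 * Real.log (Real.sqrt (-Real.log s)) ^ 2 := by ring
    linarith only [hll2, hsq_eq, hexpand]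
  have hfrac : |(x ^ 2 - y ^ 2) / s| ≤ 1 := by
    rw [abs_div, abs_of_pos hs0]
    rw [div_le_one hs0]
    rw [abs_le]
    constructor <;> linarith only [hs_def, sq_nonneg x, sq_nonneg y]
  have hT_le : T ≤ -Real.log s := by
    have h := Real.log_le_sub_one_of_pos ht0
    linarith only [h, hT_def]
  have hA : |T ^ 2 + 2 * T| ≤ 6 * (-Real.log s) := by
    rw [abs_of_nonneg (add_nonneg (pow_nonneg hT0 2) (by linarith only [hT0]))]
    linarith only [hT_sq, hT_le, ht0]
  have habs : |Real.log s| = -Real.log s := abs_of_neg (by linarith)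
  calc |divb (x, y)| = 2 * |(x ^ 2 - y ^ 2) / s| * |T ^ 2 + 2 * T| := by
        rw [key, abs_mul, abs_mul]
        norm_num
    _ ≤ 2 * 1 * (6 * (-Real.log s)) := by
        apply mul_le_mul
        · apply mul_le_mul_of_nonneg_left hfrac (by norm_num)
        · exact hA
        · exact abs_nonneg _
        · norm_num
    _ ≤ 12 * |Real.log (x ^ 2 + y ^ 2)| := by
        rw [← hs_def, habs]
        ring_nf
        exact le_refl _
end
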